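/- Let T be a Tambara functor on a finite group G. If an ideal 𝔦 ⊆ T is generated by a finite subset, then 𝔦 is generated by a single element. Specifically, if 𝔦 = ⟨s_1,…,s_n⟩ with s_i ∈ T(X_i), then 𝔦 = ⟨s⟩ where s = ι_{1+}(s_1) + ⋯ + ι_{n+}(s_n) ∈ T(X_1 ⊔ ⋯ ⊔ X_n) and ι_i are the inclusions of the summands. -/

import Mathlib

set_option autoImplicit false

/-! Finite G-sets -/

structure GSet (G : Type) [Group G] : Type 1 where
  carrier : Type
  [mulAction : MulAction G carrier]
  [finite : Finite carrier]

attribute [instance] GSet.mulAction GSet.finite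

/-- Equivariant maps of finite `G`-sets. -/
structure GSetHom {G : Type} [Group G] (X Y : GSet G) : Type where
  toFun : X.carrier → Y.carrier
  map_smul : ∀ (g : G) (x : X.carrier), toFun (g • x) = g • toFun x

namespace GSetHom

variable {G : Type} [Group G]

def id (X : GSet G) : GSetHom X X := ⟨fun x => x, fun _ _ => rfl⟩

def comp {X Y Z : GSet G} (g : GSetHom Y Z) (f : GSetHom X Y) : GSetHom X Z :=
  ⟨fun x => g.toFun (f.toFun x), fun a x => by
    show g.toFun (f.toFun (a • x)) = a • g.toFun (f.toFun x)
    rw [f.map_smul, g.map_smul]⟩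

end GSetHom

namespace GSet

variable {G : Type} [Group G]

/-- Binary disjoint union of `G`-sets. -/
def sum (X Y : GSet G) : GSet G where
  carrier := X.carrier ⊕ Y.carrier

def inl (X Y : GSet G) : GSetHom X (X.sum Y) := ⟨Sum.inl, fun _ _ => rfl⟩

def inr (X Y : GSet G) : GSetHom Y (X.sum Y) := ⟨Sum.inr, fun _ _ => rfl⟩

instance : MulAction G Empty where
  smul _ x := x.elim
  one_smul x := x.elim
  mul_smul _ _ x := x.elim

/-- The empty `G`-set. -/
def empty (G : Type) [Group G] : GSet G where
  carrier := Empty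

/-- Finite disjoint unions of `G`-sets. -/
def sigma {n : ℕ} (Xs : Fin n → GSet G) : GSet G where
  carrier := Σ i, (Xs i).carrier

def sigmaIncl {n : ℕ} (Xs : Fin n → GSet G) (i : Fin n) : GSetHom (Xs i) (sigma Xs) :=
  ⟨fun x => ⟨i, x⟩, fun _ _ => rfl⟩

/-- The canonical pullback of two `G`-maps. -/
def pullback {X Y Z : GSet G} (f : GSetHom X Z) (g : GSetHom Y Z) : GSet G where
  carrier := { q : X.carrier × Y.carrier // f.toFun q.1 = g.toFun q.2 }
  mulAction :=
  { smul := fun a q => ⟨a • q.val, by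
      show f.toFun (a • q.val.1) = g.toFun (a • q.val.2)
      rw [f.map_smul, g.map_smul, q.property]⟩
    one_smul := fun q => Subtype.ext (one_smul G q.val)
    mul_smul := fun a b q => Subtype.ext (mul_smul a b q.val) }

def pbFst {X Y Z : GSet G} (f : GSetHom X Z) (g : GSetHom Y Z) :
    GSetHom (pullback f g) X := ⟨fun q => q.val.1, fun _ _ => rfl⟩

def pbSnd {X Y Z : GSet G} (f : GSetHom X Z) (g : GSetHom Y Z) :
    GSetHom (pullback f g) Y := ⟨fun q => q.val.2, fun _ _ => rfl⟩

/-- The complement of the image of a `G`-map, as a `G`-set. -/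
def compl {X Y : GSet G} (f : GSetHom X Y) : GSet G where
  carrier := { y : Y.carrier // ∀ x, f.toFun x ≠ y }
  mulAction :=
  { smul := fun g y => ⟨g • y.val, fun x h => y.property (g⁻¹ • x) (by
      rw [f.map_smul, h, inv_smul_smul])⟩
    one_smul := fun y => Subtype.ext (one_smul G y.val)
    mul_smul := fun a b y => Subtype.ext (mul_smul a b y.val) }

def complIncl {X Y : GSet G} (f : GSetHom X Y) : GSetHom (compl f) Y :=
  ⟨fun y => y.val, fun _ _ => rfl⟩

/-- Points of Tambara's dependent product `Π_f(A)`: pairs `(y, σ)` of a point `y : Y`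
and a section `σ` of `p` on the fiber `f⁻¹(y)` (encoded as an `Option`-valued function
supported exactly on the fiber). -/
def PiProp {X Y A : GSet G} (f : GSetHom X Y) (p : GSetHom A X)
    (s : Y.carrier × (X.carrier → Option A.carrier)) : Prop :=
  (∀ x, (s.2 x).isSome = true ↔ f.toFun x = s.1) ∧
  (∀ x a, s.2 x = some a → p.toFun a = x)

def PiCar {X Y A : GSet G} (f : GSetHom X Y) (p : GSetHom A X) : Type :=
  { s : Y.carrier × (X.carrier → Option A.carrier) // PiProp f p s }

instance optionFinite {α : Type} [Finite α] : Finite (Option α) :=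
  Finite.of_equiv _ (Equiv.optionEquivSumPUnit.{0,0} α).symm

instance piFinite {X Y A : GSet G} (f : GSetHom X Y) (p : GSetHom A X) :
    Finite (PiCar f p) := by
  unfold PiCar; infer_instance

def piSmul {X Y A : GSet G} (f : GSetHom X Y) (p : GSetHom A X) (g : G)
    (s : PiCar f p) : PiCar f p :=
  ⟨(g • s.val.1, fun x => (s.val.2 (g⁻¹ • x)).map (g • ·)), by
    constructor
    · intro x
      rw [Option.isSome_map, s.property.1 (g⁻¹ • x), f.map_smul]
      constructor
      · intro h; rw [← h, smul_inv_smul]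
      · intro h; rw [h, inv_smul_smul]
    · intro x a ha
      rcases Option.map_eq_some_iff.mp ha with ⟨b, hb, rfl⟩
      rw [p.map_smul, s.property.2 _ _ hb, smul_inv_smul]⟩

instance piAction {X Y A : GSet G} (f : GSetHom X Y) (p : GSetHom A X) :
    MulAction G (PiCar f p) where
  smul := piSmul f p
  one_smul s := by
    apply Subtype.ext
    refine Prod.ext (one_smul G s.val.1) ?_
    funext x
    show (s.val.2 ((1:G)⁻¹ • x)).map ((1:G) • ·) = s.val.2 x
    rw [inv_one, one_smul]
    cases h : s.val.2 x <;> simp [one_smul]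
  mul_smul a b s := by
    apply Subtype.ext
    refine Prod.ext (mul_smul a b s.val.1) ?_
    funext x
    show (s.val.2 ((a * b)⁻¹ • x)).map ((a * b) • ·)
        = ((s.val.2 (b⁻¹ • (a⁻¹ • x))).map (b • ·)).map (a • ·)
    rw [Option.map_map, mul_inv_rev, mul_smul]
    cases h : s.val.2 (b⁻¹ • a⁻¹ • x) <;> simp [mul_smul, Function.comp]

/-- Tambara's dependent product `Π_f(A)` as a `G`-set. -/
def piObj {X Y A : GSet G} (f : GSetHom X Y) (p : GSetHom A X) : GSet G where
  carrier := PiCar f p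

/-- The projection `π : Π_f(A) → Y`. -/
def piPr {X Y A : GSet G} (f : GSetHom X Y) (p : GSetHom A X) :
    GSetHom (piObj f p) Y := ⟨fun s => s.val.1, fun _ _ => rfl⟩

theorem optGet {α : Type} {o : Option α} {a : α} (h : o = some a) :
    ∀ hs : o.isSome = true, o.get hs = a := by subst h; intro _; rfl

/-- The evaluation map `λ : X ×_Y Π_f(A) → A`, `(x, (y, σ)) ↦ σ(x)`. -/
def piEval {X Y A : GSet G} (f : GSetHom X Y) (p : GSetHom A X) :
    GSetHom (pullback f (piPr f p)) A where
  toFun z := (z.val.2.val.2 z.val.1).get (by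
    rw [z.val.2.property.1 z.val.1]; exact z.property)
  map_smul g z := by
    have hs : (z.val.2.val.2 z.val.1).isSome = true := by
      rw [z.val.2.property.1 z.val.1]; exact z.property
    obtain ⟨a, ha⟩ := Option.isSome_iff_exists.mp hs
    have h1 : z.val.2.val.2 z.val.1 = some a := ha
    have h2 : (g • z).val.2.val.2 (g • z).val.1 = some (g • a) := by
      show (z.val.2.val.2 (g⁻¹ • (g • z.val.1))).map (g • ·) = some (g • a)
      rw [inv_smul_smul, h1]; rfl
    simp only [optGet h2, optGet h1]

end GSet

namespace GSet

/-- A transitive (nonempty) finite `G`-set. -/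
def IsTransitive {G : Type} [Group G] (X : GSet G) : Prop :=
  Nonempty X.carrier ∧ MulAction.IsPretransitive G X.carrier

end GSet

/-! Tambara functors -/

/-- The underlying system of commutative rings of a Tambara functor. -/
structure TamData (G : Type) [Group G] : Type 1 where
  obj : GSet G → Type
  ring : ∀ X, CommRing (obj X)

attribute [instance] TamData.ring

/-- A Tambara functor on the finite group `G`: a system of commutative rings `obj X`
indexed by finite `G`-sets, together with restrictions `res`, additive transfers `tr`
and multiplicative transfers `nm`, functorial, additive, satisfying the Mackey
base-change conditions, the projection formula, and Tambara's distributive law. -/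
structure TambaraFunctor (G : Type) [Group G] extends TamData G where
  res : ∀ {X Y : GSet G}, GSetHom X Y → (obj Y →+* obj X)
  tr : ∀ {X Y : GSet G}, GSetHom X Y → (obj X →+ obj Y)
  nm : ∀ {X Y : GSet G}, GSetHom X Y → (obj X →* obj Y)
  res_id : ∀ {X : GSet G} (x : obj X), res (GSetHom.id X) x = x
  res_comp : ∀ {X Y Z : GSet G} (f : GSetHom X Y) (g : GSetHom Y Z) (z : obj Z),
    res f (res g z) = res (g.comp f) z
  tr_id : ∀ {X : GSet G} (x : obj X), tr (GSetHom.id X) x = x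
  tr_comp : ∀ {X Y Z : GSet G} (f : GSetHom X Y) (g : GSetHom Y Z) (x : obj X),
    tr g (tr f x) = tr (g.comp f) x
  nm_id : ∀ {X : GSet G} (x : obj X), nm (GSetHom.id X) x = x
  nm_comp : ∀ {X Y Z : GSet G} (f : GSetHom X Y) (g : GSetHom Y Z) (x : obj X),
    nm g (nm f x) = nm (g.comp f) x
  /-- additivity on binary disjoint unions -/
  add_bij : ∀ X Y : GSet G, Function.Bijective
    (fun t : obj (X.sum Y) => (res (GSet.inl X Y) t, res (GSet.inr X Y) t))
  /-- `T(∅)` is the zero ring -/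
  empty_subsingleton : ∀ x y : obj (GSet.empty G), x = y
  /-- Mackey base change for the additive transfer -/
  tr_bc : ∀ {X Y Z : GSet G} (f : GSetHom X Z) (g : GSetHom Y Z) (x : obj X),
    res g (tr f x) = tr (GSet.pbSnd f g) (res (GSet.pbFst f g) x)
  /-- Mackey base change for the multiplicative transfer -/
  nm_bc : ∀ {X Y Z : GSet G} (f : GSetHom X Z) (g : GSetHom Y Z) (x : obj X),
    res g (nm f x) = nm (GSet.pbSnd f g) (res (GSet.pbFst f g) x)
  /-- the projection formula -/
  proj_formula : ∀ {X Y : GSet G} (f : GSetHom X Y) (a : obj X) (b : obj Y),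
    tr f (a * res f b) = tr f a * b
  /-- the norm of zero is the additive transfer of `1` from the complement of the image -/
  nm_zero : ∀ {X Y : GSet G} (f : GSetHom X Y), nm f (0 : obj X) = tr (GSet.complIncl f) 1
  /-- Tambara's distributive law, via the canonical exponential diagram on `Π_f(A)` -/
  distrib : ∀ {X Y A : GSet G} (f : GSetHom X Y) (p : GSetHom A X) (a : obj A),
    nm f (tr p a) = tr (GSet.piPr f p)
      (nm (GSet.pbSnd f (GSet.piPr f p)) (res (GSet.piEval f p) a))

namespace TambaraFunctor

variable {G : Type} [Group G]

/-- `f_!(x) = f_•(x) - f_•(0)`. -/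
def shriek (T : TambaraFunctor G) {X Y : GSet G} (f : GSetHom X Y) (x : T.obj X) :
    T.obj Y := T.nm f x - T.nm f 0

end TambaraFunctor

/-- A morphism of Tambara functors: a family of ring homomorphisms natural with respect
to restrictions, additive transfers and multiplicative transfers. -/
structure TamHom {G : Type} [Group G] (T S : TambaraFunctor G) where
  app : ∀ X : GSet G, T.obj X →+* S.obj X
  app_res : ∀ {X Y : GSet G} (f : GSetHom X Y) (y : T.obj Y),
    app X (T.res f y) = S.res f (app Y y)
  app_tr : ∀ {X Y : GSet G} (f : GSetHom X Y) (x : T.obj X),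
    app Y (T.tr f x) = S.tr f (app X x)
  app_nm : ∀ {X Y : GSet G} (f : GSetHom X Y) (x : T.obj X),
    app Y (T.nm f x) = S.nm f (app X x)

namespace TambaraFunctor

variable {G : Type} [Group G]

/-- An ideal of a Tambara functor: a family of ideals closed under restrictions,
additive transfers, and satisfying `f_•(𝔦(X)) ⊆ f_•(0) + 𝔦(Y)`
(equivalently, closed under `f_!`). -/
structure IsIdeal (T : TambaraFunctor G) (I : ∀ X : GSet G, Ideal (T.obj X)) : Prop where
  res_mem : ∀ {X Y : GSet G} (f : GSetHom X Y) {y : T.obj Y}, y ∈ I Y → T.res f y ∈ I X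
  tr_mem : ∀ {X Y : GSet G} (f : GSetHom X Y) {x : T.obj X}, x ∈ I X → T.tr f x ∈ I Y
  shriek_mem : ∀ {X Y : GSet G} (f : GSetHom X Y) {x : T.obj X},
    x ∈ I X → T.shriek f x ∈ I Y

/-- The ideal generated by a family of subsets: the intersection of all ideals
containing it. -/
def gen (T : TambaraFunctor G) (S : ∀ X : GSet G, Set (T.obj X)) (X : GSet G) :
    Ideal (T.obj X) :=
  ⨅ (I : ∀ Y : GSet G, Ideal (T.obj Y)) (_ : T.IsIdeal I) (_ : ∀ Y, S Y ⊆ ↑(I Y)), I X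

/-- The family of subsets consisting of the single element `a ∈ T(A)`. -/
def single (T : TambaraFunctor G) (A : GSet G) (a : T.obj A) (X : GSet G) :
    Set (T.obj X) := { x | ∃ h : A = X, h ▸ a = x }

/-- The principal ideal `⟨a⟩` generated by `a ∈ T(A)`. -/
def principal (T : TambaraFunctor G) (A : GSet G) (a : T.obj A) :
    ∀ X : GSet G, Ideal (T.obj X) := T.gen (T.single A a)

/-- The defining set of the product of two ideals. -/
def mulSet (T : TambaraFunctor G) (I J : ∀ X : GSet G, Ideal (T.obj X)) (X : GSet G) :
    Set (T.obj X) :=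
  { x | ∃ (A : GSet G) (p : GSetHom A X) (a b : T.obj A),
      a ∈ I A ∧ b ∈ J A ∧ x = T.tr p (a * b) }

/-- The product of two ideals of a Tambara functor. -/
def mulIdl (T : TambaraFunctor G) (I J : ∀ X : GSet G, Ideal (T.obj X)) (X : GSet G) :
    Ideal (T.obj X) := Ideal.span (T.mulSet I J X)

/-- Iterated products of ideals. -/
def mulMulti (T : TambaraFunctor G) :
    List (∀ X : GSet G, Ideal (T.obj X)) → ∀ X : GSet G, Ideal (T.obj X)
  | [] => fun _ => ⊤
  | I :: ls => T.mulIdl I (T.mulMulti ls)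

/-- A prime ideal of a Tambara functor. -/
structure IsPrime (T : TambaraFunctor G) (P : ∀ X : GSet G, Ideal (T.obj X)) : Prop where
  isIdeal : T.IsIdeal P
  ne_top : ∃ X : GSet G, P X ≠ ⊤
  mem_or_mem : ∀ {X Y : GSet G}, X.IsTransitive → Y.IsTransitive →
    ∀ {a : T.obj X} {b : T.obj Y},
      (∀ Z : GSet G, T.mulIdl (T.principal X a) (T.principal Y b) Z ≤ P Z) →
      a ∈ P X ∨ b ∈ P Y

/-- A maximal ideal of a Tambara functor. -/
structure IsMaximal (T : TambaraFunctor G) (M : ∀ X : GSet G, Ideal (T.obj X)) : Prop where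
  isIdeal : T.IsIdeal M
  ne_top : ∃ X : GSet G, M X ≠ ⊤
  eq_of_le : ∀ K : ∀ X : GSet G, Ideal (T.obj X), T.IsIdeal K →
    (∀ X, M X ≤ K X) → (K = M ∨ ∀ X, K X = ⊤)

end TambaraFunctor

namespace GSet

/-- The `G`-set `G/e`, i.e. `G` with the left regular action. -/
def regular (G : Type) [Group G] [Finite G] : GSet G where
  carrier := G

/-- Right multiplication `G/e → G/e`, an equivariant map. -/
def rightMul {G : Type} [Group G] [Finite G] (g : G) :
    GSetHom (regular G) (regular G) :=
  ⟨fun x => (id x : G) * g, fun a x => mul_assoc a x g⟩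

end GSet

/-! The restriction of `s = Σ ι_{j+}(s_j)` to the summand `X_i` is `s_i` times a unit: the
summands `j ≠ i` restrict to zero because `X_j` and `X_i` are disjoint in `⊔ X_j`, and for
the injective `ι_i` Mackey base change identifies `ι_i^* ι_{i+}` with the transfer along an
isomorphism, which is multiplication by the unit `tr 1`. Hence `s` and the `s_i` generate
each other. -/

theorem GSetHom.ext {G : Type} [Group G] {X Y : GSet G} {f g : GSetHom X Y}
    (h : f.toFun = g.toFun) : f = g := by
  cases f; cases g; cases h; rfl

namespace GSet

variable {G : Type} [Group G]

theorem pbFst_eq_pbSnd_of_injective {X Y : GSet G} {f : GSetHom X Y}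
    (hf : Function.Injective f.toFun) : pbFst f f = pbSnd f f :=
  GSetHom.ext (funext fun q => hf q.property)

def diag {X Y : GSet G} (f : GSetHom X Y) : GSetHom X (pullback f f) :=
  ⟨fun x => ⟨(x, x), rfl⟩, fun _ _ => rfl⟩

theorem pbSnd_comp_diag {X Y : GSet G} (f : GSetHom X Y) :
    (pbSnd f f).comp (diag f) = GSetHom.id X :=
  GSetHom.ext rfl

theorem diag_comp_pbSnd_of_injective {X Y : GSet G} {f : GSetHom X Y}
    (hf : Function.Injective f.toFun) : (diag f).comp (pbSnd f f) = GSetHom.id _ :=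
  GSetHom.ext (funext fun q => Subtype.ext (Prod.ext (hf q.property).symm rfl))

theorem sigmaIncl_injective {n : ℕ} (Xs : Fin n → GSet G) (i : Fin n) :
    Function.Injective (sigmaIncl Xs i).toFun :=
  sigma_mk_injective (β := fun j => (Xs j).carrier)

end GSet

namespace TambaraFunctor

variable {G : Type} [Group G] (T : TambaraFunctor G)

theorem mem_gen_iff {S : ∀ X : GSet G, Set (T.obj X)} {X : GSet G} {x : T.obj X} :
    x ∈ T.gen S X ↔ ∀ I, T.IsIdeal I → (∀ Y, S Y ⊆ I Y) → x ∈ I X := by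
  simp [gen]

theorem subset_gen (S : ∀ X : GSet G, Set (T.obj X)) (X : GSet G) : S X ⊆ T.gen S X :=
  fun _ hx => T.mem_gen_iff.2 fun _ _ hS => hS X hx

theorem isIdeal_gen (S : ∀ X : GSet G, Set (T.obj X)) : T.IsIdeal (T.gen S) where
  res_mem f _ hy := T.mem_gen_iff.2 fun I hI hS => hI.res_mem f (T.mem_gen_iff.1 hy I hI hS)
  tr_mem f _ hx := T.mem_gen_iff.2 fun I hI hS => hI.tr_mem f (T.mem_gen_iff.1 hx I hI hS)
  shriek_mem f _ hx :=
    T.mem_gen_iff.2 fun I hI hS => hI.shriek_mem f (T.mem_gen_iff.1 hx I hI hS)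

theorem gen_le_gen {S S' : ∀ X : GSet G, Set (T.obj X)} (h : ∀ Y, S Y ⊆ T.gen S' Y)
    (X : GSet G) : T.gen S X ≤ T.gen S' X :=
  fun _ hx => T.mem_gen_iff.1 hx _ (T.isIdeal_gen S') h

theorem subsingleton_obj_of_isEmpty {P : GSet G} [IsEmpty P.carrier] :
    Subsingleton (T.obj P) := by
  let f : GSetHom P (GSet.empty G) := ⟨isEmptyElim, fun _ => isEmptyElim⟩
  let g : GSetHom (GSet.empty G) P := ⟨Empty.elim, fun _ x => x.elim⟩
  have hgf : g.comp f = GSetHom.id P := GSetHom.ext (funext isEmptyElim)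
  refine ⟨fun x y => ?_⟩
  rw [← T.res_id x, ← T.res_id y, ← hgf, ← T.res_comp, ← T.res_comp,
    T.empty_subsingleton (T.res g x)]

theorem isUnit_tr_one_of_inverse {P X : GSet G} (h : GSetHom P X) (k : GSetHom X P)
    (hk : h.comp k = GSetHom.id X) (kh : k.comp h = GSetHom.id P) : IsUnit (T.tr h 1) :=
  IsUnit.of_mul_eq_one (T.res k (T.tr k 1)) <| by
    rw [← T.proj_formula, one_mul, T.res_comp, kh, T.res_id, T.tr_comp, hk, T.tr_id]

theorem res_tr_of_injective {X Y : GSet G} {f : GSetHom X Y}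
    (hf : Function.Injective f.toFun) (x : T.obj X) :
    T.res f (T.tr f x) = T.tr (GSet.pbSnd f f) 1 * x := by
  rw [T.tr_bc, GSet.pbFst_eq_pbSnd_of_injective hf, ← one_mul (T.res _ x), T.proj_formula]

theorem mem_of_res_tr_mem {X Y : GSet G} {f : GSetHom X Y}
    (hf : Function.Injective f.toFun) {I : Ideal (T.obj X)} {x : T.obj X}
    (h : T.res f (T.tr f x) ∈ I) : x ∈ I := by
  obtain ⟨u, hu⟩ := T.isUnit_tr_one_of_inverse _ (GSet.diag f) (GSet.pbSnd_comp_diag f)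
    (GSet.diag_comp_pbSnd_of_injective hf)
  rw [T.res_tr_of_injective hf, ← hu] at h
  exact (Ideal.unit_mul_mem_iff_mem I u.isUnit).1 h

theorem res_tr_eq_zero_of_disjoint {X Y Z : GSet G} (f : GSetHom X Z) (g : GSetHom Y Z)
    (hfg : ∀ x y, f.toFun x ≠ g.toFun y) (x : T.obj X) : T.res g (T.tr f x) = 0 := by
  have : IsEmpty (GSet.pullback f g).carrier := ⟨fun q => hfg _ _ q.property⟩
  have := T.subsingleton_obj_of_isEmpty (P := GSet.pullback f g)
  rw [T.tr_bc, Subsingleton.elim (T.res _ x) 0, map_zero]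

theorem res_sigmaIncl_sum_tr {n : ℕ} (Xs : Fin n → GSet G) (s : ∀ i, T.obj (Xs i))
    (i : Fin n) :
    T.res (GSet.sigmaIncl Xs i) (∑ j, T.tr (GSet.sigmaIncl Xs j) (s j))
      = T.res (GSet.sigmaIncl Xs i) (T.tr (GSet.sigmaIncl Xs i) (s i)) := by
  rw [map_sum, Fintype.sum_eq_single i]
  intro j hj
  exact T.res_tr_eq_zero_of_disjoint _ _ (fun _ _ h => hj (congrArg Sigma.fst h)) _

end TambaraFunctor

theorem finitely_generated_is_principal_general (G : Type) [Group G]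
    (T : TambaraFunctor G) (n : ℕ) (Xs : Fin n → GSet G) (s : ∀ i : Fin n, T.obj (Xs i)) :
    T.gen (fun Y => { y | ∃ i : Fin n, ∃ h : Xs i = Y, h ▸ s i = y })
      = T.principal (GSet.sigma Xs) (∑ i : Fin n, T.tr (GSet.sigmaIncl Xs i) (s i)) := by
  funext X
  apply le_antisymm
  · refine T.gen_le_gen (fun _ => ?_) X
    rintro _ ⟨i, rfl, rfl⟩
    apply T.mem_of_res_tr_mem (GSet.sigmaIncl_injective Xs i)
    rw [← T.res_sigmaIncl_sum_tr]
    exact (T.isIdeal_gen _).res_mem _ (T.subset_gen _ _ ⟨rfl, rfl⟩)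
  · refine T.gen_le_gen (fun _ => ?_) X
    rintro _ ⟨rfl, rfl⟩
    exact Ideal.sum_mem _ fun i _ =>
      (T.isIdeal_gen _).tr_mem _ (T.subset_gen _ _ ⟨i, rfl, rfl⟩)

/-- an ideal generated by finitely many elements `s i ∈ T(X i)` is generated
by the single element `s = Σ ι_{i+}(s_i) ∈ T(X_1 ⊔ ⋯ ⊔ X_n)`. -/
theorem finitely_generated_is_principal (G : Type) [Group G] [Finite G]
    (T : TambaraFunctor G) (n : ℕ) (Xs : Fin n → GSet G) (s : ∀ i : Fin n, T.obj (Xs i)) :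
    T.gen (fun Y => { y | ∃ i : Fin n, ∃ h : Xs i = Y, h ▸ s i = y })
      = T.principal (GSet.sigma Xs) (∑ i : Fin n, T.tr (GSet.sigmaIncl Xs i) (s i)) :=
  finitely_generated_is_principal_general G T n Xs s
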